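/- arXiv:1401.1442 — 3 statements merged into one kernel-verified Lean document; each statement's English description precedes it below -/
import Mathlib

section
/- Marginal of the site occupation numbers (Proposition 2.1(a)): for every finitely supported η : ℤ^d → ℕ with Σ_{x∈ℤ^d} η_x = n, one has Σ_{r ∈ Λ_n with η_x(r) = η_x for all x} W(r) = ∏_{x∈ℤ^d} h_{η_x}·exp(−η_x·V(x/L)); consequently P_{L,n}({r : η_x(r) = η_x for all x}) = (1/Z_{L,n})·∏_{x∈ℤ^d} h_{η_x}·exp(−η_x·V(x/L)). -/
/-!
A configuration `r` with occupation numbers `η` is the same as a choice, at every site `x` of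
`supp η`, of an integer partition of `η x`: the multiplicities `r_{x,j}` of its parts `j`.
The weight `W` factorises over sites, and since the parts at `x` add up to `η x`, the potential
contributes `exp (-η x V(x/L))` whatever the partition, leaving the summand of `h_{η x}`.
Summing over the independent choices at the sites turns the sum into the product of the
`h_{η x} exp (-η x V(x/L))`.
-/

open scoped BigOperators ENNReal NNReal
open Filter MeasureTheory

namespace Spart

/-- `exp(-t)` for an extended-real `t`, with `exp(-∞) = 0`. -/
noncomputable def expNeg (t : ℝ≥0∞) : ℝ := if t = ∞ then 0 else Real.exp (-t.toReal)

/-- Sites of the lattice `ℤ^d`. -/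
abbrev Site (d : ℕ) := Fin d → ℤ

/-- A spatial partition: a finitely supported family `(r_{x,j})` of natural numbers.
(Only indices `j ≥ 1` are meaningful; configurations are supported on `j ≥ 1`.) -/
abbrev Config (d : ℕ) := (Site d × ℕ) →₀ ℕ

/-- The rescaled site `x/L ∈ ℝ^d`. -/
noncomputable def scaledSite {d : ℕ} (x : Site d) (L : ℝ) : Fin d → ℝ :=
  fun i => (x i : ℝ) / L

/-- Site occupation number `η_x(r) = Σ_j j r_{x,j}`. -/
noncomputable def siteOcc {d : ℕ} (r : Config d) (x : Site d) : ℕ :=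
  ∑ p ∈ r.support, if p.1 = x then p.2 * r p else 0

/-- Component counts `r_j(r) = Σ_x r_{x,j}`. -/
noncomputable def compCount {d : ℕ} (r : Config d) (j : ℕ) : ℕ :=
  ∑ p ∈ r.support, if p.2 = j then r p else 0

/-- Total mass `Σ_{x,j} j r_{x,j}`. -/
noncomputable def mass {d : ℕ} (r : Config d) : ℕ :=
  ∑ p ∈ r.support, p.2 * r p

/-- The (unnormalized) weight of a spatial partition. -/
noncomputable def W {d : ℕ} (V : (Fin d → ℝ) → ℝ≥0∞) (θ : ℕ → ℝ) (L : ℝ) (r : Config d) : ℝ :=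
  ∏ p ∈ r.support,
    (1 / (Nat.factorial (r p)) : ℝ) *
      ((θ p.2 / (p.2 : ℝ)) * expNeg ((p.2 : ℝ≥0∞) * V (scaledSite p.1 L))) ^ (r p)

/-- The canonical partition function `Z_{L,n}`. -/
noncomputable def Z {d : ℕ} (V : (Fin d → ℝ) → ℝ≥0∞) (θ : ℕ → ℝ) (L : ℝ) (n : ℕ) : ℝ :=
  ∑' r : {r : Config d // mass r = n}, W V θ L (r : Config d)

/-- The probability of an event under the canonical measure `P_{L,n}`. -/
noncomputable def P {d : ℕ} (V : (Fin d → ℝ) → ℝ≥0∞) (θ : ℕ → ℝ) (L : ℝ) (n : ℕ)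
    (E : Set (Config d)) : ℝ :=
  (∑' r : {r : Config d // mass r = n ∧ r ∈ E}, W V θ L (r : Config d)) / Z V θ L n

/-- Expectation of an observable under the canonical measure `P_{L,n}`. -/
noncomputable def Ex {d : ℕ} (V : (Fin d → ℝ) → ℝ≥0∞) (θ : ℕ → ℝ) (L : ℝ) (n : ℕ)
    (f : Config d → ℝ) : ℝ :=
  (∑' r : {r : Config d // mass r = n}, f (r : Config d) * W V θ L (r : Config d)) / Z V θ L n

/-- Single-site normalization `h_m = Σ_{λ ⊢ m} ∏_j (1/ρ_j(λ)!) (θ_j/j)^{ρ_j(λ)}`. -/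
noncomputable def hcoef (θ : ℕ → ℝ) (m : ℕ) : ℝ :=
  ∑ lam : Nat.Partition m, ∏ j ∈ lam.parts.toFinset,
    (1 / (Nat.factorial (Multiset.count j lam.parts)) : ℝ) *
      (θ j / (j : ℝ)) ^ (Multiset.count j lam.parts)

end Spart

theorem Finsupp.prod_uncurry_index' {α β M N : Type*} [Zero M] [CommMonoid N]
    (f : α →₀ β →₀ M) (g : α → β → M → N) :
    f.uncurry.prod (fun p c => g p.1 p.2 c) = f.prod fun a f => f.prod (g a) := by
  simp [Finsupp.prod, Finsupp.uncurry, Finset.prod_disjiUnion]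

namespace Spart

lemma expNeg_add (a b : ℝ≥0∞) : expNeg (a + b) = expNeg a * expNeg b := by
  unfold expNeg
  by_cases ha : a = ∞
  · simp [ha]
  by_cases hb : b = ∞
  · simp [hb]
  rw [if_neg (by simp [ENNReal.add_eq_top, ha, hb]), if_neg ha, if_neg hb,
    ENNReal.toReal_add ha hb, neg_add, Real.exp_add]

lemma expNeg_sum {ι : Type*} (s : Finset ι) (f : ι → ℝ≥0∞) :
    expNeg (∑ i ∈ s, f i) = ∏ i ∈ s, expNeg (f i) := by
  classical
  induction s using Finset.induction with
  | empty => simp [expNeg]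
  | insert a s ha ih => rw [Finset.sum_insert ha, Finset.prod_insert ha, expNeg_add, ih]

lemma expNeg_nat_mul (k : ℕ) (t : ℝ≥0∞) : expNeg (k * t) = expNeg t ^ k := by
  simpa using expNeg_sum (Finset.range k) fun _ => t

variable {d : ℕ}

lemma siteOcc_eq_sum_toMultiset (r : Config d) (x : Site d) :
    siteOcc r x = (Finsupp.toMultiset (r.curry x)).sum := by
  have hcurry := Finsupp.sum_curry_index r fun y j k => if y = x then j * k else 0
  rw [Finsupp.sum_eq_single x (fun y _ hy => by simp [hy]) (fun _ => by simp)] at hcurry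
  simp only [if_true] at hcurry
  rw [Finsupp.sum_toMultiset]
  exact hcurry.symm.trans (Finsupp.sum_congr fun j _ => mul_comm _ _)

lemma mass_eq_sum_siteOcc (r : Config d) (A : Finset (Site d))
    (hA : ∀ p ∈ r.support, p.1 ∈ A) :
    mass r = ∑ x ∈ A, siteOcc r x := by
  unfold mass siteOcc
  rw [Finset.sum_comm]
  refine Finset.sum_congr rfl fun p hp => ?_
  rw [Finset.sum_ite_eq A p.1 (fun _ => p.2 * r p), if_pos (hA p hp)]

section Weights

variable (V : (Fin d → ℝ) → ℝ≥0∞) (θ : ℕ → ℝ) (L : ℝ)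

noncomputable def siteFactor (x : Site d) (j k : ℕ) : ℝ :=
  (1 / (Nat.factorial k) : ℝ) * ((θ j / (j : ℝ)) * expNeg ((j : ℝ≥0∞) * V (scaledSite x L))) ^ k

noncomputable def partWeight (s : Multiset ℕ) : ℝ :=
  ∏ j ∈ s.toFinset, (1 / (Nat.factorial (s.count j)) : ℝ) * (θ j / (j : ℝ)) ^ s.count j

lemma W_eq_prod_curry (r : Config d) :
    W V θ L r = r.curry.prod fun x m => m.prod (siteFactor V θ L x) := by
  rw [← Finsupp.prod_uncurry_index', Finsupp.uncurry_curry]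
  rfl

lemma prod_siteFactor_toFinsupp (x : Site d) (s : Multiset ℕ) :
    (Multiset.toFinsupp s).prod (siteFactor V θ L x)
      = partWeight θ s * expNeg (s.sum * V (scaledSite x L)) := by
  simp only [Finsupp.prod, Multiset.toFinsupp_support, Multiset.toFinsupp_apply, siteFactor,
    mul_pow, ← mul_assoc, Finset.prod_mul_distrib, ← expNeg_nat_mul, ← expNeg_sum]
  rw [Finset.sum_multiset_count s, Nat.cast_sum, Finset.sum_mul, partWeight,
    Finset.prod_mul_distrib]
  congr 1
  refine congrArg expNeg (Finset.sum_congr rfl fun j _ => ?_)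
  rw [smul_eq_mul, Nat.cast_mul]

/-- In Lean `θ 0 / 0 = 0`, so a configuration using the index `j = 0` has weight zero. -/
lemma ne_zero_of_W_ne_zero {r : Config d} (hr : W V θ L r ≠ 0) {x : Site d} {j : ℕ}
    (hj : r (x, j) ≠ 0) : j ≠ 0 := by
  rintro rfl
  exact hr (Finset.prod_eq_zero (Finsupp.mem_support_iff.mpr hj) (by simp [zero_pow hj]))

end Weights

section OfPartitions

variable (η : Site d →₀ ℕ)

noncomputable def ofPartitions (p : ∀ x : η.support, Nat.Partition (η x)) : Config d :=
  (Finsupp.indicator η.support fun x hx => Multiset.toFinsupp (p ⟨x, hx⟩).parts).uncurry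

variable (p : ∀ x : η.support, Nat.Partition (η x))

lemma curry_ofPartitions :
    (ofPartitions η p).curry
      = Finsupp.indicator η.support fun x hx => Multiset.toFinsupp (p ⟨x, hx⟩).parts :=
  Finsupp.curry_uncurry _

lemma ofPartitions_apply (x : η.support) (j : ℕ) :
    ofPartitions η p (x, j) = (p x).parts.count j := by
  simp [ofPartitions, Finsupp.indicator_of_mem x.2]

lemma ofPartitions_apply_of_notMem {x : Site d} (hx : x ∉ η.support) (j : ℕ) :
    ofPartitions η p (x, j) = 0 := by
  simp [ofPartitions, Finsupp.indicator_of_notMem hx]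

lemma siteOcc_ofPartitions (x : Site d) : siteOcc (ofPartitions η p) x = η x := by
  rw [siteOcc_eq_sum_toMultiset, curry_ofPartitions]
  by_cases hx : x ∈ η.support
  · rw [Finsupp.indicator_of_mem hx, Multiset.toFinsupp_toMultiset, Nat.Partition.parts_sum]
  · rw [Finsupp.indicator_of_notMem hx, Finsupp.notMem_support_iff.mp hx]
    simp

lemma mass_ofPartitions : mass (ofPartitions η p) = ∑ x ∈ η.support, η x := by
  rw [mass_eq_sum_siteOcc _ η.support]
  · exact Finset.sum_congr rfl fun x _ => siteOcc_ofPartitions η p x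
  · rintro ⟨x, j⟩ h
    by_contra hx
    exact Finsupp.mem_support_iff.mp h (ofPartitions_apply_of_notMem η p hx j)

lemma W_ofPartitions (V : (Fin d → ℝ) → ℝ≥0∞) (θ : ℕ → ℝ) (L : ℝ) :
    W V θ L (ofPartitions η p)
      = ∏ x : η.support, partWeight θ (p x).parts * expNeg (η x * V (scaledSite x L)) := by
  rw [W_eq_prod_curry, curry_ofPartitions, Finsupp.prod_indicator_index_eq_prod_attach,
    Finset.univ_eq_attach]
  · refine Finset.prod_congr rfl fun x _ => ?_
    rw [prod_siteFactor_toFinsupp, Nat.Partition.parts_sum]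
  · exact fun _ _ => Finsupp.prod_zero_index

lemma ofPartitions_injective : Function.Injective (ofPartitions η) := by
  intro p q h
  funext x
  ext j
  simpa only [ofPartitions_apply] using DFunLike.congr_fun h (x.1, j)

lemma exists_ofPartitions_eq {r : Config d} (hocc : ∀ x, siteOcc r x = η x)
    (hpos : ∀ x j, r (x, j) ≠ 0 → j ≠ 0) : ∃ p, ofPartitions η p = r := by
  have parts_pos : ∀ x j, j ∈ Finsupp.toMultiset (r.curry x) → 0 < j :=
    fun x j hj => Nat.pos_of_ne_zero (hpos x j (by simpa using hj))
  refine ⟨fun x => ⟨Finsupp.toMultiset (r.curry x), fun hj => parts_pos x _ hj,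
    by rw [← siteOcc_eq_sum_toMultiset, hocc]⟩, ?_⟩
  ext ⟨x, j⟩
  by_cases hx : x ∈ η.support
  · exact (ofPartitions_apply η _ ⟨x, hx⟩ j).trans (Finsupp.count_toMultiset _ _)
  rw [ofPartitions_apply_of_notMem η _ hx]
  by_contra hne
  have hj : j ∈ Finsupp.toMultiset (r.curry x) := by simpa using Ne.symm hne
  have hsum : (Finsupp.toMultiset (r.curry x)).sum = 0 := by
    rw [← siteOcc_eq_sum_toMultiset, hocc, Finsupp.notMem_support_iff.mp hx]
  exact (parts_pos x j hj).ne' (Multiset.sum_eq_zero_iff.mp hsum j hj)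

end OfPartitions

section Marginal

variable (V : (Fin d → ℝ) → ℝ≥0∞) (θ : ℕ → ℝ) (L : ℝ) (η : Site d →₀ ℕ)

lemma tsum_W_siteOcc_eq {n : ℕ} (hη : ∑ x ∈ η.support, η x = n) :
    ∑' r : {r : Config d // mass r = n ∧ ∀ x, siteOcc r x = η x}, W V θ L r
      = ∑ p, W V θ L (ofPartitions η p) := by
  refine (tsum_eq_tsum_of_ne_zero_bij
    (fun p => ⟨ofPartitions η p, (mass_ofPartitions η p).trans hη, siteOcc_ofPartitions η p⟩)
    ?_ ?_ fun _ => rfl).trans (tsum_fintype _)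
  · intro p q h
    exact Subtype.ext (ofPartitions_injective η (congrArg Subtype.val h))
  · intro r hr
    obtain ⟨p, hp⟩ := exists_ofPartitions_eq η r.2.2 fun _ _ => ne_zero_of_W_ne_zero V θ L hr
    exact ⟨⟨p, by simpa [hp] using hr⟩, Subtype.ext hp⟩

lemma prod_hcoef_mul_expNeg :
    ∏ x ∈ η.support, hcoef θ (η x) * expNeg (η x * V (scaledSite x L))
      = ∑ p, W V θ L (ofPartitions η p) := by
  simp only [W_ofPartitions, ← Finset.prod_coe_sort η.support, hcoef, Finset.sum_mul]
  rw [Finset.prod_univ_sum, Fintype.piFinset_univ]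
  rfl

end Marginal

theorem statement0_general (d : ℕ)
    (V : (Fin d → ℝ) → ℝ≥0∞) (θ : ℕ → ℝ) (L : ℝ) (n : ℕ)
    (η : Site d →₀ ℕ) (hη : ∑ x ∈ η.support, η x = n) :
    (∑' r : {r : Config d // mass r = n ∧ ∀ x : Site d, siteOcc r x = η x},
        W V θ L (r : Config d))
      = ∏ x ∈ η.support, hcoef θ (η x) * expNeg ((η x : ℝ≥0∞) * V (scaledSite x L)) ∧
    P V θ L n {r | ∀ x : Site d, siteOcc r x = η x}
      = (1 / Z V θ L n) *
          ∏ x ∈ η.support, hcoef θ (η x) * expNeg ((η x : ℝ≥0∞) * V (scaledSite x L)) := by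
  have marginal := (tsum_W_siteOcc_eq V θ L η hη).trans (prod_hcoef_mul_expNeg V θ L η).symm
  exact ⟨marginal, (congrArg (· / Z V θ L n) marginal).trans (one_div_mul_eq_div _ _).symm⟩

/-- Proposition 2.1(a): marginal of the site occupation numbers. -/
theorem statement0 (d : ℕ) (hd : 1 ≤ d)
    (V : (Fin d → ℝ) → ℝ≥0∞) (θ : ℕ → ℝ) (L : ℝ) (n : ℕ)
    (hL : 0 < L) (hθ : ∀ j, 1 ≤ j → 0 ≤ θ j)
    (hZsum : Summable (fun r : {r : Config d // mass r = n} => W V θ L (r : Config d)))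
    (hZpos : 0 < Z V θ L n)
    (η : Site d →₀ ℕ) (hη : ∑ x ∈ η.support, η x = n) :
    (∑' r : {r : Config d // mass r = n ∧ ∀ x : Site d, siteOcc r x = η x},
        W V θ L (r : Config d))
      = ∏ x ∈ η.support, hcoef θ (η x) * expNeg ((η x : ℝ≥0∞) * V (scaledSite x L)) ∧
    P V θ L n {r | ∀ x : Site d, siteOcc r x = η x}
      = (1 / Z V θ L n) *
          ∏ x ∈ η.support, hcoef θ (η x) * expNeg ((η x : ℝ≥0∞) * V (scaledSite x L)) :=
  statement0_general d V θ L n η hη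

end Spart
end

section
/- Correspondence between weights and single-site normalizations (Proposition 2.3): let (h_m)_{m≥0} be nonnegative real numbers with h_0 = 1 such that the power series Σ_{m≥0} h_m·z^m has a positive radius of convergence. Then there exists a unique sequence (θ_j)_{j≥1} of real numbers such that for all m ≥ 1, h_m = Σ_{λ ⊢ m} ∏_{j≥1} (1/ρ_j(λ)!)·(θ_j/j)^{ρ_j(λ)}. Moreover, θ_j ≥ 0 for all j ≥ 1 if and only if the sequence (h_m)_{m≥0} is infinitely divisible. -/
/-!
`hcoef θ` is the coefficient sequence of `exp (∑ θ_j X^j / j)`, i.e. of the unique power series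
`H` with `H(0) = 1` and `H' = (∑ θ_{j+1} X^j) H`. Combinatorially this differential equation is
the recurrence `m h_m = ∑_{j=1}^m θ_j h_{m-j}`, obtained by deleting one part `j` from a partition
of `m`. Hence the weights of `h` are the coefficients of the logarithmic derivative `H'/H`, which
gives existence and uniqueness, and the `n`-fold convolution `H ↦ H^n` multiplies the weights by
`n`. If `θ ≥ 0`, the `n`-th convolution root of `h` is therefore `hcoef (θ / n) ≥ 0`. Conversely,
if `h` is infinitely divisible then `hcoef (θ / n) j ≥ 0` for every `n`, and
`n * j * hcoef (θ / n) j → θ j` as `n → ∞`.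
-/

open scoped BigOperators ENNReal NNReal
open Filter MeasureTheory

namespace Spart

/-- Convolution of two sequences. -/
noncomputable def convSeq (a b : ℕ → ℝ) : ℕ → ℝ :=
  fun m => ∑ k ∈ Finset.range (m + 1), a k * b (m - k)

/-- `n`-fold convolution of a sequence with itself (`nConv 0 g` is the unit for convolution). -/
noncomputable def nConv : ℕ → (ℕ → ℝ) → (ℕ → ℝ)
  | 0, _ => fun m => if m = 0 then 1 else 0
  | (k + 1), g => convSeq g (nConv k g)

/-- A sequence of nonnegative reals is infinitely divisible if for every `n ≥ 1` it is the
`n`-fold convolution of a sequence of nonnegative reals. -/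
def InfDivisible (h : ℕ → ℝ) : Prop :=
  ∀ n : ℕ, 1 ≤ n → ∃ g : ℕ → ℝ, (∀ m, 0 ≤ g m) ∧ nConv n g = h


open Finset PowerSeries

noncomputable def weightFactor (θ : ℕ → ℝ) (j c : ℕ) : ℝ :=
  (1 / c.factorial : ℝ) * (θ j / j) ^ c

noncomputable def multisetWeight (θ : ℕ → ℝ) (s : Multiset ℕ) : ℝ :=
  ∏ j ∈ s.toFinset, weightFactor θ j (s.count j)

lemma hcoef_eq_sum_multisetWeight (θ : ℕ → ℝ) (m : ℕ) :
    hcoef θ m = ∑ lam : m.Partition, multisetWeight θ lam.parts := rfl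

@[simp] lemma weightFactor_zero_right (θ : ℕ → ℝ) (j : ℕ) : weightFactor θ j 0 = 1 := by
  simp [weightFactor]

lemma mul_weightFactor_succ (θ : ℕ → ℝ) {j : ℕ} (hj : j ≠ 0) (c : ℕ) :
    (j * (c + 1) : ℝ) * weightFactor θ j (c + 1) = θ j * weightFactor θ j c := by
  have : (j : ℝ) ≠ 0 := by exact_mod_cast hj
  simp only [weightFactor, Nat.factorial_succ, pow_succ]
  push_cast
  field_simp

lemma multisetWeight_eq_prod_of_subset (θ : ℕ → ℝ) {s : Multiset ℕ} {t : Finset ℕ}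
    (hst : s.toFinset ⊆ t) : multisetWeight θ s = ∏ j ∈ t, weightFactor θ j (s.count j) :=
  prod_subset hst fun j _ hj => by
    rw [Multiset.count_eq_zero_of_notMem (by simpa using hj), weightFactor_zero_right]

lemma mul_count_mul_multisetWeight (θ : ℕ → ℝ) {s : Multiset ℕ} {j : ℕ} (hj : j ≠ 0)
    (hjs : j ∈ s) :
    (j * s.count j : ℝ) * multisetWeight θ s = θ j * multisetWeight θ (s.erase j) := by
  have hj' : j ∈ s.toFinset := Multiset.mem_toFinset.2 hjs
  obtain ⟨c, hc⟩ : ∃ c, s.count j = c + 1 :=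
    Nat.exists_eq_add_one.2 (Multiset.count_pos.2 hjs)
  rw [multisetWeight, multisetWeight_eq_prod_of_subset θ
      (Multiset.toFinset_subset.2 (Multiset.erase_subset j s)),
    ← mul_prod_erase _ _ hj', ← mul_prod_erase _ _ hj', Multiset.count_erase_self, hc,
    ← mul_assoc, ← mul_assoc, Nat.cast_succ, mul_weightFactor_succ θ hj, add_tsub_cancel_right]
  congr 1
  refine prod_congr rfl fun i hi => ?_
  rw [Multiset.count_erase_of_ne (ne_of_mem_erase hi)]

lemma sum_mul_count_eq_sum {s : Multiset ℕ} {t : Finset ℕ} (hst : s.toFinset ⊆ t) :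
    ∑ j ∈ t, j * s.count j = s.sum := by
  rw [sum_multiset_count, sum_subset hst fun j _ hj => ?_]
  · simp [mul_comm]
  · simp [Multiset.count_eq_zero_of_notMem (by simpa using hj)]

lemma _root_.Nat.Partition.toFinset_parts_subset_Icc {m : ℕ} (lam : m.Partition) :
    lam.parts.toFinset ⊆ Icc 1 m := fun j hj => by
  rw [Multiset.mem_toFinset] at hj
  exact mem_Icc.2 ⟨lam.parts_pos hj, Nat.Partition.le_of_mem_parts hj⟩

lemma sum_count_mul_multisetWeight (θ : ℕ → ℝ) {m j : ℕ} (hj : 1 ≤ j) (hjm : j ≤ m) :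
    ∑ lam : m.Partition, (j * lam.parts.count j : ℝ) * multisetWeight θ lam.parts
      = θ j * hcoef θ (m - j) := by
  rw [← Fintype.sum_subtype_add_sum_subtype (fun lam : m.Partition => j ∈ lam.parts),
    Fintype.sum_eq_zero (fun lam : {lam : m.Partition // j ∉ lam.parts} => _)
      fun lam => by simp [Multiset.count_eq_zero_of_notMem lam.2], add_zero,
    hcoef_eq_sum_multisetWeight, mul_sum,
    ← (Nat.Partition.partitionWithPartEquiv hj hjm).symm.sum_comp]
  refine Fintype.sum_congr _ _ fun mu => ?_
  rw [mul_count_mul_multisetWeight θ (by omega) (by simp),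
    Nat.Partition.partitionWithPartEquiv_symm_apply_parts, Multiset.erase_cons_head]

theorem mul_hcoef (θ : ℕ → ℝ) (m : ℕ) :
    (m : ℝ) * hcoef θ m = ∑ j ∈ Icc 1 m, θ j * hcoef θ (m - j) := by
  have hmass (lam : m.Partition) : (m : ℝ) = ∑ j ∈ Icc 1 m, (j * lam.parts.count j : ℝ) := by
    exact_mod_cast (lam.parts_sum ▸ sum_mul_count_eq_sum lam.toFinset_parts_subset_Icc).symm
  calc (m : ℝ) * hcoef θ m
      = ∑ lam : m.Partition, ∑ j ∈ Icc 1 m,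
          (j * lam.parts.count j : ℝ) * multisetWeight θ lam.parts := by
        rw [hcoef_eq_sum_multisetWeight, mul_sum]
        refine sum_congr rfl fun lam _ => ?_
        rw [← sum_mul, ← hmass]
    _ = ∑ j ∈ Icc 1 m, θ j * hcoef θ (m - j) := by
        rw [sum_comm]
        exact sum_congr rfl fun j hj =>
          sum_count_mul_multisetWeight θ (mem_Icc.1 hj).1 (mem_Icc.1 hj).2

lemma hcoef_zero_right (θ : ℕ → ℝ) : hcoef θ 0 = 1 := by
  simp [hcoef_eq_sum_multisetWeight, multisetWeight]

lemma hcoef_zero_left (m : ℕ) : hcoef (fun _ => 0) m = if m = 0 then 1 else 0 := by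
  rcases eq_or_ne m 0 with rfl | hm
  · simp [hcoef_zero_right]
  · simpa [hm] using mul_hcoef (fun _ => 0) m

lemma hcoef_nonneg {θ : ℕ → ℝ} (hθ : ∀ j, 1 ≤ j → 0 ≤ θ j) (m : ℕ) : 0 ≤ hcoef θ m :=
  sum_nonneg fun lam _ => prod_nonneg fun j hj => by
    have hj : 1 ≤ j := lam.parts_pos (Multiset.mem_toFinset.1 hj)
    exact mul_nonneg (by positivity) (pow_nonneg (div_nonneg (hθ j hj) j.cast_nonneg) _)

lemma continuous_hcoef_mul (θ : ℕ → ℝ) (m : ℕ) :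
    Continuous fun t : ℝ => hcoef (fun j => θ j * t) m := by
  unfold hcoef
  fun_prop

theorem _root_.PowerSeries.eq_of_derivative_eq_mul {K : Type*} [Field K] [CharZero K]
    {F G S : K⟦X⟧} (hF : d⁄dX K F = S * F) (hG : d⁄dX K G = S * G)
    (hG0 : constantCoeff G ≠ 0) (h0 : constantCoeff F = constantCoeff G) : F = G := by
  have hinv : G⁻¹ * G = 1 := PowerSeries.inv_mul_cancel G hG0
  -- `(F * G⁻¹)' = S F G⁻¹ - F G⁻² S G = 0`
  have hquot : F * G⁻¹ = 1 := by
    refine derivative.ext ?_ (by simp [constantCoeff_inv, h0, hG0])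
    rw [Derivation.leibniz, derivative_inv', smul_eq_mul, smul_eq_mul, derivative_one]
    linear_combination (-F * G⁻¹ ^ 2) * hG + G⁻¹ * hF - S * F * G⁻¹ * hinv
  calc F = F * G⁻¹ * G := by rw [mul_assoc, hinv, mul_one]
    _ = G := by rw [hquot, one_mul]

theorem derivative_mk_hcoef (θ : ℕ → ℝ) :
    d⁄dX ℝ (mk (hcoef θ)) = mk (fun i => θ (i + 1)) * mk (hcoef θ) := by
  ext n
  rw [coeff_derivative, coeff_mk, mul_comm, coeff_mul, ← Nat.cast_add_one, mul_hcoef,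
    ← Ico_add_one_right_eq_Icc, sum_Ico_eq_sum_range, Nat.sum_antidiagonal_eq_sum_range_succ_mk]
  refine sum_congr rfl fun i _ => ?_
  simp only [coeff_mk, add_comm 1 i]
  congr 2
  omega

theorem eq_hcoef_of_derivative_mk {θ A : ℕ → ℝ} (hA0 : A 0 = 1)
    (hA : d⁄dX ℝ (mk A) = mk (fun i => θ (i + 1)) * mk A) : A = hcoef θ := by
  have := eq_of_derivative_eq_mul hA (derivative_mk_hcoef θ) (by simp [hcoef_zero_right])
    (by simp [hA0, hcoef_zero_right])
  funext m
  simpa using congrArg (coeff m) this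

theorem eq_of_hcoef_eq {θ θ' : ℕ → ℝ} (h0 : θ 0 = 0) (h0' : θ' 0 = 0)
    (he : hcoef θ = hcoef θ') : θ = θ' := by
  have hne : mk (hcoef θ) ≠ 0 := fun h => by
    simpa [hcoef_zero_right] using congrArg (coeff 0) h
  have hshift : mk (fun i => θ (i + 1)) = mk (fun i => θ' (i + 1)) :=
    mul_right_cancel₀ hne (by rw [← derivative_mk_hcoef, he, derivative_mk_hcoef])
  funext j
  rcases j with _ | i
  · rw [h0, h0']
  · simpa using congrArg (coeff i) hshift

noncomputable def weightsOf (h : ℕ → ℝ) : ℕ → ℝ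
  | 0 => 0
  | i + 1 => coeff i (d⁄dX ℝ (mk h) * (mk h)⁻¹)

theorem hcoef_weightsOf {h : ℕ → ℝ} (h0 : h 0 = 1) : hcoef (weightsOf h) = h := by
  refine (eq_hcoef_of_derivative_mk h0 ?_).symm
  have hlog : mk (fun i => weightsOf h (i + 1)) = d⁄dX ℝ (mk h) * (mk h)⁻¹ := by
    ext i
    simp [weightsOf]
  rw [hlog, mul_assoc, PowerSeries.inv_mul_cancel _ (by simp [h0]), mul_one]

lemma mk_convSeq (a b : ℕ → ℝ) : mk (convSeq a b) = mk a * mk b := by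
  ext n
  simp [convSeq, coeff_mul, Nat.sum_antidiagonal_eq_sum_range_succ_mk]

lemma mk_nConv (n : ℕ) (g : ℕ → ℝ) : mk (nConv n g) = mk g ^ n := by
  induction n with
  | zero => ext m; simp [nConv, coeff_one]
  | succ n ih => rw [nConv, mk_convSeq, ih, pow_succ']

lemma nConv_apply_zero (n : ℕ) (g : ℕ → ℝ) : nConv n g 0 = g 0 ^ n := by
  simpa using congrArg (coeff 0) (mk_nConv n g)

theorem nConv_hcoef (n : ℕ) (θ : ℕ → ℝ) : nConv n (hcoef θ) = hcoef (fun j => n * θ j) := by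
  refine eq_hcoef_of_derivative_mk (by rw [nConv_apply_zero, hcoef_zero_right, one_pow]) ?_
  have hscale : mk (fun i => n * θ (i + 1)) = (n : ℝ⟦X⟧) * mk (fun i => θ (i + 1)) := by
    ext i
    rw [← map_natCast (C (R := ℝ)), coeff_C_mul, coeff_mk, coeff_mk]
  rw [mk_nConv, derivative_pow, derivative_mk_hcoef, hscale]
  rcases n with _ | n
  · simp
  · rw [pow_succ]
    push_cast
    ring

theorem nonneg_of_forall_hcoef_div_nonneg {θ : ℕ → ℝ} {j : ℕ} (hj : 1 ≤ j)
    (hθ : ∀ n : ℕ, 1 ≤ n → 0 ≤ hcoef (fun k => θ k / n) j) : 0 ≤ θ j := by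
  set f : ℝ → ℝ := fun t => ∑ i ∈ Icc 1 j, θ i * hcoef (fun k => θ k * t) (j - i)
  have hf (t : ℝ) : (j : ℝ) * hcoef (fun k => θ k * t) j = t * f t := by
    rw [mul_hcoef, mul_sum]
    exact sum_congr rfl fun i _ => by ring
  have hf0 : f 0 = θ j := by
    simp only [f, mul_zero, hcoef_zero_left]
    rw [sum_eq_single_of_mem j (mem_Icc.2 ⟨hj, le_rfl⟩) fun i hi hij => by
      simp [show j - i ≠ 0 by have := (mem_Icc.1 hi).2; omega]]
    simp
  have hf_nonneg (n : ℕ) (hn : 1 ≤ n) : 0 ≤ f (n⁻¹ : ℝ) := by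
    have hn' : (0 : ℝ) < (n : ℝ)⁻¹ := by positivity
    refine nonneg_of_mul_nonneg_right ?_ hn'
    rw [← hf]
    simpa only [div_eq_mul_inv] using mul_nonneg j.cast_nonneg (hθ n hn)
  have hcont : Continuous f :=
    continuous_finsetSum _ fun i _ => continuous_const.mul (continuous_hcoef_mul θ _)
  rw [← hf0]
  exact ge_of_tendsto ((hcont.tendsto 0).comp tendsto_inv_atTop_nhds_zero_nat)
    (eventually_atTop.2 ⟨1, hf_nonneg⟩)

theorem nonneg_iff_infDivisible_hcoef {θ : ℕ → ℝ} (h0 : θ 0 = 0) :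
    (∀ j, 1 ≤ j → 0 ≤ θ j) ↔ InfDivisible (hcoef θ) := by
  constructor
  · intro hθ n hn
    refine ⟨hcoef (fun k => θ k / n),
      hcoef_nonneg fun j hj => div_nonneg (hθ j hj) n.cast_nonneg, ?_⟩
    rw [nConv_hcoef]
    congr 1
    funext k
    field_simp
  · intro hdiv j hj
    refine nonneg_of_forall_hcoef_div_nonneg hj fun n hn => ?_
    obtain ⟨g, hg, hgθ⟩ := hdiv n hn
    have hg0 : g 0 = 1 := by
      rw [← pow_eq_one_iff_of_nonneg (hg 0) (by omega : n ≠ 0), ← nConv_apply_zero, hgθ,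
        hcoef_zero_right]
    have hgw : hcoef (weightsOf g) = g := hcoef_weightsOf hg0
    have hscale : (fun k => n * weightsOf g k) = θ :=
      eq_of_hcoef_eq (by simp [weightsOf]) h0 (by rw [← nConv_hcoef, hgw, hgθ])
    have hdiv_eq : (fun k => θ k / n) = weightsOf g := by
      rw [← hscale]
      funext k
      field_simp
    rw [hdiv_eq, hgw]
    exact hg j

theorem statement4_general (h : ℕ → ℝ) (h0 : h 0 = 1) :
    ∃ θ : ℕ → ℝ, (θ 0 = 0 ∧ ∀ m : ℕ, 1 ≤ m → h m = hcoef θ m) ∧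
      (∀ θ' : ℕ → ℝ, θ' 0 = 0 → (∀ m : ℕ, 1 ≤ m → h m = hcoef θ' m) → θ' = θ) ∧
      ((∀ j : ℕ, 1 ≤ j → 0 ≤ θ j) ↔ InfDivisible h) := by
  have hrep : hcoef (weightsOf h) = h := hcoef_weightsOf h0
  refine ⟨weightsOf h, ⟨rfl, fun m _ => (congrFun hrep m).symm⟩, fun θ' hθ'0 hθ' => ?_, ?_⟩
  · have hrepθ' : hcoef θ' = h := funext fun m => by
      rcases Nat.eq_zero_or_pos m with rfl | hm
      · rw [hcoef_zero_right, h0]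
      · exact (hθ' m hm).symm
    exact eq_of_hcoef_eq hθ'0 rfl (hrepθ'.trans hrep.symm)
  · simpa only [hrep] using nonneg_iff_infDivisible_hcoef (θ := weightsOf h) rfl

/-- Proposition 2.3: correspondence between weights `(θ_j)_{j≥1}` and
single-site normalizations `(h_m)`; nonnegativity of the weights is equivalent to infinite
divisibility. (A sequence `(θ_j)_{j ≥ 1}` is encoded as `θ : ℕ → ℝ` with `θ 0 = 0`.) -/
theorem statement4 (h : ℕ → ℝ) (hpos : ∀ m, 0 ≤ h m) (h0 : h 0 = 1)
    (hrad : ∃ z : ℝ, 0 < z ∧ Summable (fun m : ℕ => h m * z ^ m)) :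
    ∃ θ : ℕ → ℝ, (θ 0 = 0 ∧ ∀ m : ℕ, 1 ≤ m → h m = hcoef θ m) ∧
      (∀ θ' : ℕ → ℝ, θ' 0 = 0 → (∀ m : ℕ, 1 ≤ m → h m = hcoef θ' m) → θ' = θ) ∧
      ((∀ j : ℕ, 1 ≤ j → 0 ≤ θ j) ↔ InfDivisible h) :=
  statement4_general h h0

end Spart
end

section
/- Detailed balance for the chain of Chinese restaurants (Lemma 4.1, case of distinct sites): with the Ewens weights, the rate function t, the transition λ ↦ λ' and the rates q, q' described below, one has W(λ)·q = W(λ')·q' for every admissible move; hence P_{L,n} satisfies detailed balance for these rates. -/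
open scoped BigOperators ENNReal NNReal
open Filter MeasureTheory

namespace Spart

/-- The zero-range exit rate in the Ewens case: `g(m) = m/(θ+m-1)`, `g(0)=0`. -/
noncomputable def gEwens (θ : ℝ) (m : ℕ) : ℝ :=
  if m = 0 then 0 else (m : ℝ) / (θ + (m : ℝ) - 1)

/-- Transition rate of the chain of Chinese restaurants: a customer leaves a `j`-table at
restaurant `x` (rate `g(η_x) p₋(j)`), moves to restaurant `y` (probability `t x y`) and joins a
`k`-table there (`k = 0` meaning he opens a new table). -/
noncomputable def ccrRate {d : ℕ} (θ : ℝ) (t : Site d → Site d → ℝ) (lam : Config d)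
    (x y : Site d) (j k : ℕ) : ℝ :=
  gEwens θ (siteOcc lam x) * t x y *
    (((j : ℝ) * (lam (x, j) : ℝ)) / (siteOcc lam x : ℝ)) *
    (if 1 ≤ k then ((k : ℝ) * (lam (y, k) : ℝ)) / ((siteOcc lam y : ℝ) + θ)
     else θ / ((siteOcc lam y : ℝ) + θ))

end Spart

/-!
`W` is a product over entries `(p, r_p)` of factors `a_p ^ r_p / r_p!`, and a move changes only
four entries, each by one. Trading the factorial against the seat weight turns each of them into
a factor `θ e_s^m` with `e_s = exp(-V(s/L))`: the two sides differ only by `e_x t(x,y)` versus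
`e_y t(y,x)`, which agree by reversibility of `t`. The denominators of the two rates coincide
because `η_x` drops by one and `η_y` rises by one.
-/

namespace Finsupp

@[to_additive]
theorem exists_prod_eq_mul_prod_of_eqOn_compl {α M N : Type*} [Zero M] [CommMonoid N]
    [DecidableEq α] (f g : α →₀ M) (h : α → M → N) (h_zero : ∀ a, h a 0 = 1) (T : Finset α)
    (hfg : ∀ a ∉ T, f a = g a) :
    ∃ R, f.prod h = R * ∏ a ∈ T, h a (f a) ∧ g.prod h = R * ∏ a ∈ T, h a (g a) := by
  set S := f.support ∪ g.support ∪ T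
  have hTS : T ⊆ S := Finset.subset_union_right
  have hfS : f.support ⊆ S := Finset.subset_union_left.trans Finset.subset_union_left
  have hgS : g.support ⊆ S := Finset.subset_union_right.trans Finset.subset_union_left
  refine ⟨∏ a ∈ S \ T, h a (f a), ?_, ?_⟩
  · rw [prod_of_support_subset f hfS h fun a _ => h_zero a, Finset.prod_sdiff hTS]
  · rw [prod_of_support_subset g hgS h fun a _ => h_zero a, ← Finset.prod_sdiff hTS]
    congr 1
    exact Finset.prod_congr rfl fun a ha => by rw [hfg a (Finset.mem_sdiff.1 ha).2]

end Finsupp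

lemma Nat.mul_eq_mul_add_self_of_succ {m a b : ℕ} (h : 1 ≤ m → a = b + 1) :
    m * a = m * b + m := by
  rcases Nat.eq_zero_or_pos m with rfl | hm
  · simp
  · rw [h hm, mul_add_one]

namespace Spart

lemma expNeg_natCast_mul (m : ℕ) (v : ℝ≥0∞) : expNeg (m * v) = expNeg v ^ m := by
  rcases Nat.eq_zero_or_pos m with rfl | hm
  · simp [expNeg]
  have hm' : (m : ℝ≥0∞) ≠ 0 := by exact_mod_cast hm.ne'
  rcases eq_or_ne v ∞ with rfl | hv
  · simp [expNeg, ENNReal.mul_top hm', zero_pow hm.ne']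
  · rw [expNeg, expNeg, if_neg (ENNReal.mul_ne_top (ENNReal.natCast_ne_top m) hv), if_neg hv,
      ENNReal.toReal_mul, ENNReal.toReal_natCast, ← Real.exp_nat_mul, mul_neg]

lemma siteOcc_eq_sum {d : ℕ} (r : Config d) (x : Site d) :
    siteOcc r x = r.sum (fun p c => if p.1 = x then p.2 * c else 0) := rfl

section Weights

variable {d : ℕ} (V : (Fin d → ℝ) → ℝ≥0∞) (L : ℝ)

/-- The factor of `W` contributed by `c` tables of size `p.2` at restaurant `p.1`. -/
noncomputable def tableWeight (θ : ℕ → ℝ) (p : Site d × ℕ) (c : ℕ) : ℝ :=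
  (1 / c.factorial : ℝ) * ((θ p.2 / p.2) * expNeg (p.2 * V (scaledSite p.1 L))) ^ c

lemma W_eq_prod_tableWeight (θ : ℕ → ℝ) (r : Config d) :
    W V θ L r = r.prod (tableWeight V L θ) := rfl

lemma tableWeight_zero (θ : ℕ → ℝ) (p : Site d × ℕ) : tableWeight V L θ p 0 = 1 := by
  simp [tableWeight]

lemma tableWeight_succ_mul (θ : ℕ → ℝ) (s : Site d) {m : ℕ} (hm : m ≠ 0) (c : ℕ) :
    tableWeight V L θ (s, m) (c + 1) * (m * (c + 1))
      = tableWeight V L θ (s, m) c * (θ m * expNeg (V (scaledSite s L)) ^ m) := by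
  have hm' : (m : ℝ) ≠ 0 := Nat.cast_ne_zero.2 hm
  have hu : θ m / m * expNeg (V (scaledSite s L)) ^ m * m
      = θ m * expNeg (V (scaledSite s L)) ^ m := by
    field_simp
  simp only [tableWeight, expNeg_natCast_mul, ← hu]
  generalize θ m / m * expNeg (V (scaledSite s L)) ^ m = u
  rw [Nat.factorial_succ, Nat.cast_mul, Nat.cast_add_one]
  field_simp
  ring

/-- Unnormalized probability that a customer arriving at restaurant `s` sits down at a table of
size `k`, `k = 0` meaning a new table. -/
noncomputable def seatWeight (θ : ℝ) (r : Config d) (s : Site d) (k : ℕ) : ℝ :=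
  if 1 ≤ k then k * r (s, k) else θ

lemma tableWeight_mul_seatWeight (θ : ℝ) {μ μ' : Config d} (s : Site d) (k : ℕ)
    (hz : μ (s, 0) = 0) (hz' : μ' (s, 0) = 0) (h : 1 ≤ k → μ (s, k) = μ' (s, k) + 1) :
    tableWeight V L (fun _ => θ) (s, k) (μ (s, k)) * seatWeight θ μ s k
      = tableWeight V L (fun _ => θ) (s, k) (μ' (s, k))
        * (θ * expNeg (V (scaledSite s L)) ^ k) := by
  rcases Nat.eq_zero_or_pos k with rfl | hk
  · simp [seatWeight, hz, hz', tableWeight_zero]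
  · rw [seatWeight, if_pos (show 1 ≤ k from hk), h hk, Nat.cast_add_one]
    exact tableWeight_succ_mul V L _ s hk.ne' _

end Weights

/-- The admissible move `lam → lam'`: a customer leaves a `j`-table at `x` and joins a `k`-table
at `y ≠ x`. -/
structure IsMove {d : ℕ} (lam lam' : Config d) (x y : Site d) (j k : ℕ) : Prop where
  ne : x ≠ y
  one_le : 1 ≤ j
  zero_left : ∀ s, lam (s, 0) = 0
  zero_right : ∀ s, lam' (s, 0) = 0
  leave : lam (x, j) = lam' (x, j) + 1
  leave_pred : 2 ≤ j → lam' (x, j - 1) = lam (x, j - 1) + 1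
  join : 1 ≤ k → lam (y, k) = lam' (y, k) + 1
  join_succ : lam' (y, k + 1) = lam (y, k + 1) + 1
  eq_of_ne : ∀ p, p ≠ (x, j) → p ≠ (x, j - 1) → p ≠ (y, k) → p ≠ (y, k + 1) → lam' p = lam p

namespace IsMove

variable {d : ℕ} {lam lam' : Config d} {x y : Site d} {j k : ℕ}

def touched (x y : Site d) (j k : ℕ) : Finset (Site d × ℕ) :=
  {(x, j), (x, j - 1)} ∪ {(y, k), (y, k + 1)}

lemma eq_of_notMem_touched (hm : IsMove lam lam' x y j k) (p : Site d × ℕ)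
    (hp : p ∉ touched x y j k) : lam p = lam' p := by
  simp only [touched, Finset.mem_union, Finset.mem_insert, Finset.mem_singleton, not_or] at hp
  exact (hm.eq_of_ne p hp.1.1 hp.1.2 hp.2.1 hp.2.2).symm

@[to_additive]
lemma prod_touched (hm : IsMove lam lam' x y j k) {M : Type*} [CommMonoid M]
    (f : Site d × ℕ → M) :
    ∏ p ∈ touched x y j k, f p = f (x, j) * f (x, j - 1) * (f (y, k) * f (y, k + 1)) := by
  have hdisj : Disjoint ({(x, j), (x, j - 1)} : Finset _) {(y, k), (y, k + 1)} := by
    simp [hm.ne.symm]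
  rw [touched, Finset.prod_union hdisj, Finset.prod_pair, Finset.prod_pair]
  · simp
  · simp only [ne_eq, Prod.mk.injEq, true_and]; have := hm.one_le; omega

lemma siteOcc_left (hm : IsMove lam lam' x y j k) : siteOcc lam x = siteOcc lam' x + 1 := by
  classical
  obtain ⟨B, hB, hB'⟩ := Finsupp.exists_sum_eq_add_sum_of_eqOn_compl lam lam'
    (fun p c => if p.1 = x then p.2 * c else 0) (fun _ => by simp) (touched x y j k)
    hm.eq_of_notMem_touched
  have e₁ := Nat.mul_eq_mul_add_self_of_succ (m := j) fun _ => hm.leave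
  have e₂ := Nat.mul_eq_mul_add_self_of_succ (m := j - 1) fun h => hm.leave_pred (by omega)
  have := hm.one_le
  rw [siteOcc_eq_sum, siteOcc_eq_sum, hB, hB', sum_touched hm, sum_touched hm]
  simp only [if_neg hm.ne.symm, if_true]
  omega

lemma siteOcc_right (hm : IsMove lam lam' x y j k) : siteOcc lam' y = siteOcc lam y + 1 := by
  classical
  obtain ⟨B, hB, hB'⟩ := Finsupp.exists_sum_eq_add_sum_of_eqOn_compl lam lam'
    (fun p c => if p.1 = y then p.2 * c else 0) (fun _ => by simp) (touched x y j k)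
    hm.eq_of_notMem_touched
  have e₁ := Nat.mul_eq_mul_add_self_of_succ (m := k) hm.join
  have e₂ := Nat.mul_eq_mul_add_self_of_succ (m := k + 1) fun _ => hm.join_succ
  rw [siteOcc_eq_sum, siteOcc_eq_sum, hB, hB', sum_touched hm, sum_touched hm]
  simp only [if_neg hm.ne, if_true]
  omega

lemma W_mul_seatWeight (hm : IsMove lam lam' x y j k) (V : (Fin d → ℝ) → ℝ≥0∞) (θ L : ℝ)
    (t : Site d → Site d → ℝ)
    (htbal : expNeg (V (scaledSite x L)) * t x y = expNeg (V (scaledSite y L)) * t y x) :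
    W V (fun _ => θ) L lam * (t x y * seatWeight θ lam x j * seatWeight θ lam y k)
      = W V (fun _ => θ) L lam'
        * (t y x * seatWeight θ lam' y (k + 1) * seatWeight θ lam' x (j - 1)) := by
  classical
  set f := tableWeight V L (fun _ => θ)
  obtain ⟨R, hR, hR'⟩ := Finsupp.exists_prod_eq_mul_prod_of_eqOn_compl lam lam' f
    (tableWeight_zero V L _) (touched x y j k) hm.eq_of_notMem_touched
  set ex := expNeg (V (scaledSite x L))
  set ey := expNeg (V (scaledSite y L))
  have hxj := tableWeight_mul_seatWeight V L θ x j (hm.zero_left x) (hm.zero_right x)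
    fun _ => hm.leave
  have hyk := tableWeight_mul_seatWeight V L θ y k (hm.zero_left y) (hm.zero_right y) hm.join
  have hyk' := tableWeight_mul_seatWeight V L θ y (k + 1) (hm.zero_right y) (hm.zero_left y)
    fun _ => hm.join_succ
  have hxj' := tableWeight_mul_seatWeight V L θ x (j - 1) (hm.zero_right x) (hm.zero_left x)
    fun h => hm.leave_pred (by omega)
  have hpow : ex ^ j = ex ^ (j - 1) * ex := (pow_sub_one_mul (by have := hm.one_le; omega) ex).symm
  rw [W_eq_prod_tableWeight, W_eq_prod_tableWeight, hR, hR', prod_touched hm, prod_touched hm]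
  calc R * (f (x, j) (lam (x, j)) * f (x, j - 1) (lam (x, j - 1))
          * (f (y, k) (lam (y, k)) * f (y, k + 1) (lam (y, k + 1))))
        * (t x y * seatWeight θ lam x j * seatWeight θ lam y k)
      = R * f (x, j - 1) (lam (x, j - 1)) * f (y, k + 1) (lam (y, k + 1))
        * (f (x, j) (lam (x, j)) * seatWeight θ lam x j)
        * (f (y, k) (lam (y, k)) * seatWeight θ lam y k) * t x y := by ring
    _ = R * f (x, j - 1) (lam (x, j - 1)) * f (y, k + 1) (lam (y, k + 1))
        * (f (x, j) (lam' (x, j)) * (θ * ex ^ j))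
        * (f (y, k) (lam' (y, k)) * (θ * ey ^ k)) * t x y := by rw [hxj, hyk]
    _ = R * f (x, j) (lam' (x, j)) * f (y, k) (lam' (y, k))
        * (f (x, j - 1) (lam (x, j - 1)) * (θ * ex ^ (j - 1)))
        * (f (y, k + 1) (lam (y, k + 1)) * (θ * ey ^ (k + 1))) * t y x := by
      rw [hpow, pow_succ]
      linear_combination (R * f (x, j - 1) (lam (x, j - 1)) * f (y, k + 1) (lam (y, k + 1))
        * f (x, j) (lam' (x, j)) * f (y, k) (lam' (y, k)) * θ ^ 2 * ex ^ (j - 1) * ey ^ k) * htbal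
    _ = R * (f (x, j) (lam' (x, j)) * f (x, j - 1) (lam' (x, j - 1))
          * (f (y, k) (lam' (y, k)) * f (y, k + 1) (lam' (y, k + 1))))
        * (t y x * seatWeight θ lam' y (k + 1) * seatWeight θ lam' x (j - 1)) := by
      rw [← hxj', ← hyk']; ring

end IsMove

lemma ccrRate_eq_div {d : ℕ} (θ : ℝ) (t : Site d → Site d → ℝ) (μ : Config d) (x y : Site d)
    {j : ℕ} (k : ℕ) (hj : 1 ≤ j) (hx : siteOcc μ x ≠ 0) :
    ccrRate θ t μ x y j k = t x y * seatWeight θ μ x j * seatWeight θ μ y k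
      / ((θ + siteOcc μ x - 1) * (siteOcc μ y + θ)) := by
  have hx' : (siteOcc μ x : ℝ) ≠ 0 := Nat.cast_ne_zero.2 hx
  rw [ccrRate, gEwens, if_neg hx, seatWeight, seatWeight, if_pos hj]
  split_ifs <;> field_simp

lemma P_singleton {d : ℕ} (V : (Fin d → ℝ) → ℝ≥0∞) (θ : ℕ → ℝ) (L : ℝ) {n : ℕ} {μ : Config d}
    (hμ : mass μ = n) : P V θ L n {μ} = W V θ L μ / Z V θ L n := by
  rw [P, tsum_eq_single (⟨μ, hμ, rfl⟩ : {r : Config d // mass r = n ∧ r ∈ ({μ} : Set _)})]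
  exact fun r hr => absurd (Subtype.ext (Set.mem_singleton_iff.mp r.2.2)) hr

theorem statement6_general (d : ℕ)
    (V : (Fin d → ℝ) → ℝ≥0∞) (θ : ℝ) (L : ℝ) (n : ℕ)
    (t : Site d → Site d → ℝ)
    (htbal : ∀ x y, expNeg (V (scaledSite x L)) * t x y = expNeg (V (scaledSite y L)) * t y x)
    (lam lam' : Config d) (hmass : mass lam = n) (hmass' : mass lam' = n)
    (x y : Site d) (hxy : x ≠ y) (j k : ℕ) (hj : 1 ≤ j)
    (hz : ∀ s : Site d, lam (s, 0) = 0) (hz' : ∀ s : Site d, lam' (s, 0) = 0)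
    (h1 : lam (x, j) = lam' (x, j) + 1)
    (h2 : 2 ≤ j → lam' (x, j - 1) = lam (x, j - 1) + 1)
    (h3 : 1 ≤ k → lam (y, k) = lam' (y, k) + 1)
    (h4 : lam' (y, k + 1) = lam (y, k + 1) + 1)
    (h5 : ∀ p : Site d × ℕ, p ≠ (x, j) → p ≠ (x, j - 1) → p ≠ (y, k) → p ≠ (y, k + 1) →
      lam' p = lam p) :
    W V (fun _ => θ) L lam * ccrRate θ t lam x y j k
      = W V (fun _ => θ) L lam' * ccrRate θ t lam' y x (k + 1) (j - 1) ∧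
    P V (fun _ => θ) L n {lam} * ccrRate θ t lam x y j k
      = P V (fun _ => θ) L n {lam'} * ccrRate θ t lam' y x (k + 1) (j - 1) := by
  have hm : IsMove lam lam' x y j k := ⟨hxy, hj, hz, hz', h1, h2, h3, h4, h5⟩
  have hocc_x := hm.siteOcc_left
  have hocc_y := hm.siteOcc_right
  have hW : W V (fun _ => θ) L lam * ccrRate θ t lam x y j k
      = W V (fun _ => θ) L lam' * ccrRate θ t lam' y x (k + 1) (j - 1) := by
    rw [ccrRate_eq_div θ t lam x y k hj (by omega),
      ccrRate_eq_div θ t lam' y x (j - 1) (Nat.le_add_left 1 k) (by omega),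
      ← mul_div_assoc, ← mul_div_assoc, hm.W_mul_seatWeight V θ L t (htbal x y), hocc_x, hocc_y]
    push_cast
    ring
  refine ⟨hW, ?_⟩
  rw [P_singleton V _ L hmass, P_singleton V _ L hmass', div_mul_eq_mul_div, div_mul_eq_mul_div, hW]

/-- Lemma 4.1, case of distinct sites: detailed balance for the chain of
Chinese restaurants with Ewens weights. The reverse move takes a customer from a `(k+1)`-table
at `y` to a `(j-1)`-table at `x` (`j = 1` meaning he opens a new table). -/
theorem statement6 (d : ℕ) (hd : 1 ≤ d)
    (V : (Fin d → ℝ) → ℝ≥0∞) (θ : ℝ) (hθ : 0 < θ) (L : ℝ) (hL : 0 < L) (n : ℕ)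
    (hZsum : Summable (fun r : {r : Config d // mass r = n} => W V (fun _ => θ) L (r : Config d)))
    (hZpos : 0 < Z V (fun _ => θ) L n)
    (t : Site d → Site d → ℝ) (ht0 : ∀ x y, 0 ≤ t x y)
    (ht1 : ∀ x, HasSum (fun y => t x y) 1)
    (htbal : ∀ x y, expNeg (V (scaledSite x L)) * t x y = expNeg (V (scaledSite y L)) * t y x)
    (lam lam' : Config d) (hmass : mass lam = n) (hmass' : mass lam' = n)
    (x y : Site d) (hxy : x ≠ y) (j k : ℕ) (hj : 1 ≤ j)
    (hz : ∀ s : Site d, lam (s, 0) = 0) (hz' : ∀ s : Site d, lam' (s, 0) = 0)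
    (h1 : lam (x, j) = lam' (x, j) + 1)
    (h2 : 2 ≤ j → lam' (x, j - 1) = lam (x, j - 1) + 1)
    (h3 : 1 ≤ k → lam (y, k) = lam' (y, k) + 1)
    (h4 : lam' (y, k + 1) = lam (y, k + 1) + 1)
    (h5 : ∀ p : Site d × ℕ, p ≠ (x, j) → p ≠ (x, j - 1) → p ≠ (y, k) → p ≠ (y, k + 1) →
      lam' p = lam p) :
    W V (fun _ => θ) L lam * ccrRate θ t lam x y j k
      = W V (fun _ => θ) L lam' * ccrRate θ t lam' y x (k + 1) (j - 1) ∧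
    P V (fun _ => θ) L n {lam} * ccrRate θ t lam x y j k
      = P V (fun _ => θ) L n {lam'} * ccrRate θ t lam' y x (k + 1) (j - 1) :=
  statement6_general d V θ L n t htbal lam lam' hmass hmass' x y hxy j k hj hz hz' h1 h2 h3 h4 h5

end Spart
end
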